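/- arXiv:2504.13543 — 2 statements merged into one kernel-verified Lean document; each statement's English description precedes it below -/
import Mathlib

section
/- Let X be a determining sequence for K and c ∈ ℓ²(ℕ). If f : ℝ^d → ℝ is defined pointwise by f(x) = Σ_{k∈ℕ} c_k K(x_k, x), then there is a unique element f̃ ∈ H_{K,X} satisfying ⟨f̃, K(·,x)⟩_K = f(x) for all x ∈ ℝ^d. -/
/-! With `c_F` the truncation of `c` to a finite set `F` and `A = A_{K,X}`, the partial sums
`s_F = ∑_{m ∈ F} c_m K(·, x_m)` satisfy `‖s_F‖² = ⟪A c_F, c_F⟫ ≤ ‖A‖ ∑_{m ∈ F} c_m²`, so the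
series `∑ c_m K(·, x_m)` converges in `H`. Its sum lies in `H_{K,X}` and, by continuity of the inner
product, reproduces `f`. Two elements of `H_{K,X}` with the same inner products against every
`K(·, x_n)` coincide: their difference lies in `H_{K,X}` and is orthogonal to it. -/

open scoped RealInnerProductSpace

/-- A continuous symmetric kernel is positive definite if all kernel matrices
at finite sets of pairwise distinct points are (symmetric) positive definite. -/
def IsPDKernel {E : Type*} [TopologicalSpace E] (K : E → E → ℝ) : Prop :=
  Continuous (fun p : E × E => K p.1 p.2) ∧ (∀ x y, K x y = K y x) ∧
  ∀ (n : ℕ) (x : Fin n → E), Function.Injective x →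
    (Matrix.of fun i j => K (x i) (x j)).PosDef

/-- A family (v i) is a Riesz basis of the closed subspace S of a Hilbert space if it lies
in S and is the image of the canonical orthonormal basis of ℓ² under a bounded invertible
operator onto S. -/
def IsRieszBasisOf {ι H : Type*} [DecidableEq ι] [NormedAddCommGroup H]
    [InnerProductSpace ℝ H] (S : Submodule ℝ H) (v : ι → H) : Prop :=
  (∀ i, v i ∈ S) ∧
  ∃ T : (lp (fun _ : ι => ℝ) 2) ≃L[ℝ] S, ∀ i, (T (lp.single 2 i 1) : H) = v i

open Finset

section FinitelySupported

variable {ι : Type*}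

theorem memℓp_finset_indicator (F : Finset ι) (c : ι → ℝ) (p : ENNReal) :
    Memℓp ((F : Set ι).indicator c) p :=
  (memℓp_zero <| F.finite_toSet.subset fun _ hj => Set.mem_of_indicator_ne_zero hj).of_exponent_ge
    zero_le

theorem lp.real_inner_eq_sum_of_eq_zero_off (u v : lp (fun _ : ι => ℝ) 2) (F : Finset ι)
    (hv : ∀ j ∉ F, v j = 0) : ⟪u, v⟫ = ∑ j ∈ F, u j * v j := by
  refine (lp.hasSum_inner u v).unique ?_
  simp only [Real.inner_apply]
  exact hasSum_sum_of_ne_finset_zero fun j hj => by rw [hv j hj, mul_zero]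

end FinitelySupported

section GramOperator

variable {ι H : Type*} [NormedAddCommGroup H] [InnerProductSpace ℝ H] {e : ι → H}
  {T : lp (fun _ : ι => ℝ) 2 →L[ℝ] lp (fun _ : ι => ℝ) 2}

theorem norm_sum_smul_sq_le_of_hasSum_gram
    (hT : ∀ (c : lp (fun _ : ι => ℝ) 2) (j : ι),
      HasSum (fun m => ⟪e j, e m⟫ * c m) (T c j))
    (F : Finset ι) (c : ι → ℝ) :
    ‖∑ m ∈ F, c m • e m‖ ^ 2 ≤ ‖T‖ * ∑ m ∈ F, c m ^ 2 := by
  set v : lp (fun _ : ι => ℝ) 2 := ⟨(F : Set ι).indicator c, memℓp_finset_indicator F c 2⟩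
  have hv_mem : ∀ j ∈ F, v j = c j := fun j hj => Set.indicator_of_mem (by simpa using hj) c
  have hv_off : ∀ j ∉ F, v j = 0 := fun j hj => Set.indicator_of_notMem (by simpa using hj) c
  have hTv : ∀ j, T v j = ∑ m ∈ F, ⟪e j, e m⟫ * c m := by
    intro j
    rw [(hT v j).unique <|
      hasSum_sum_of_ne_finset_zero fun m hm => by rw [hv_off m hm, mul_zero]]
    exact sum_congr rfl fun m hm => by rw [hv_mem m hm]
  have h_gram : ‖∑ m ∈ F, c m • e m‖ ^ 2 = ⟪T v, v⟫ := by
    rw [← real_inner_self_eq_norm_sq, sum_inner, lp.real_inner_eq_sum_of_eq_zero_off _ _ F hv_off]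
    refine sum_congr rfl fun j hj => ?_
    rw [real_inner_smul_left, inner_sum, hTv, hv_mem j hj, mul_comm]
    congr 1
    exact sum_congr rfl fun m _ => by rw [real_inner_smul_right, mul_comm]
  have h_norm : ‖v‖ ^ 2 = ∑ m ∈ F, c m ^ 2 := by
    rw [← real_inner_self_eq_norm_sq, lp.real_inner_eq_sum_of_eq_zero_off _ _ F hv_off]
    exact sum_congr rfl fun j hj => by rw [hv_mem j hj, sq]
  calc ‖∑ m ∈ F, c m • e m‖ ^ 2 = ⟪T v, v⟫ := h_gram
    _ ≤ ‖T v‖ * ‖v‖ := real_inner_le_norm _ _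
    _ ≤ ‖T‖ * ‖v‖ * ‖v‖ := by gcongr; exact T.le_opNorm v
    _ = ‖T‖ * ∑ m ∈ F, c m ^ 2 := by rw [mul_assoc, ← sq, h_norm]


theorem summable_smul_of_hasSum_gram [CompleteSpace H]
    (hT : ∀ (c : lp (fun _ : ι => ℝ) 2) (j : ι),
      HasSum (fun m => ⟪e j, e m⟫ * c m) (T c j))
    (c : lp (fun _ : ι => ℝ) 2) : Summable fun m => c m • e m := by
  have hc : Summable fun m => c m ^ 2 := by
    refine (lp.hasSum_inner c c).summable.congr fun m => ?_
    simp [sq]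
  rw [summable_iff_vanishing_norm]
  intro ε hε
  have hT₁ : 0 < ‖T‖ + 1 := by positivity
  obtain ⟨s, hs⟩ := summable_iff_vanishing_norm.mp hc (ε ^ 2 / (‖T‖ + 1)) (by positivity)
  refine ⟨s, fun t ht => ?_⟩
  have hct : ∑ m ∈ t, c m ^ 2 < ε ^ 2 / (‖T‖ + 1) := (le_abs_self _).trans_lt (hs t ht)
  have hsq : ‖∑ m ∈ t, c m • e m‖ ^ 2 < ε ^ 2 :=
    calc ‖∑ m ∈ t, c m • e m‖ ^ 2 ≤ ‖T‖ * ∑ m ∈ t, c m ^ 2 :=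
          norm_sum_smul_sq_le_of_hasSum_gram hT t c
      _ ≤ (‖T‖ + 1) * ∑ m ∈ t, c m ^ 2 := by gcongr; linarith
      _ < (‖T‖ + 1) * (ε ^ 2 / (‖T‖ + 1)) := by gcongr
      _ = ε ^ 2 := mul_div_cancel₀ _ hT₁.ne'
  exact (pow_lt_pow_iff_left₀ (norm_nonneg _) hε.le two_ne_zero).mp hsq

end GramOperator

theorem HasSum.mem_topologicalClosure {ι R E : Type*} [Semiring R] [AddCommMonoid E]
    [Module R E] [TopologicalSpace E] [ContinuousAdd E] [ContinuousConstSMul R E]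
    {S : Submodule R E} {f : ι → E} {a : E} (h : HasSum f a) (hf : ∀ i, f i ∈ S) :
    a ∈ S.topologicalClosure :=
  mem_closure_of_tendsto h (.of_forall fun _ => S.sum_mem fun i _ => hf i)

theorem eq_of_mem_topologicalClosure_span_of_inner_eq {ι 𝕜 E : Type*} [RCLike 𝕜]
    [NormedAddCommGroup E] [InnerProductSpace 𝕜 E] {v : ι → E} {u w : E}
    (hu : u ∈ (Submodule.span 𝕜 (Set.range v)).topologicalClosure)
    (hw : w ∈ (Submodule.span 𝕜 (Set.range v)).topologicalClosure)
    (h : ∀ i, inner 𝕜 u (v i) = inner 𝕜 w (v i)) : u = w := by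
  have hle : (Submodule.span 𝕜 (Set.range v)).topologicalClosure ≤
      LinearMap.ker (innerSL 𝕜 (u - w) : E →ₗ[𝕜] 𝕜) := by
    refine Submodule.topologicalClosure_minimal _ ?_ (innerSL 𝕜 (u - w)).isClosed_ker
    rw [Submodule.span_le]
    rintro _ ⟨i, rfl⟩
    simp [h i]
  have h_self : inner 𝕜 (u - w) (u - w) = 0 := hle (sub_mem hu hw)
  exact sub_eq_zero.mp (inner_self_eq_zero.mp h_self)

theorem stmt_10_general {d : ℕ}
    (K : EuclideanSpace ℝ (Fin d) → EuclideanSpace ℝ (Fin d) → ℝ)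
    {H : Type*} [NormedAddCommGroup H] [InnerProductSpace ℝ H] [CompleteSpace H]
    (k : EuclideanSpace ℝ (Fin d) → H)
    (hk : ∀ x y, ⟪k x, k y⟫ = K x y)
    (x : ℕ → EuclideanSpace ℝ (Fin d))
    -- X is determining: the infinite kernel matrix A_{K,X} acts as a bounded
    -- bijective operator T on ℓ²(ℕ)
    (T : lp (fun _ : ℕ => ℝ) 2 →L[ℝ] lp (fun _ : ℕ => ℝ) 2)
    (hT : ∀ (c : lp (fun _ : ℕ => ℝ) 2) (j : ℕ),
      HasSum (fun m => K (x j) (x m) * c m) (T c j))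
    (c : lp (fun _ : ℕ => ℝ) 2) (f : EuclideanSpace ℝ (Fin d) → ℝ)
    (hf : ∀ y, HasSum (fun m => c m * K (x m) y) (f y)) :
    ∃! ft, ft ∈ (Submodule.span ℝ (Set.range fun n => k (x n))).topologicalClosure ∧
      ∀ y, ⟪ft, k y⟫ = f y := by
  have hgram (c : lp (fun _ : ℕ => ℝ) 2) (j : ℕ) :
      HasSum (fun m => ⟪k (x j), k (x m)⟫ * c m) (T c j) := by
    simpa only [hk] using hT c j
  obtain ⟨ft, hft⟩ := summable_smul_of_hasSum_gram hgram c
  have hft_mem : ft ∈ (Submodule.span ℝ (Set.range fun n => k (x n))).topologicalClosure :=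
    hft.mem_topologicalClosure fun m => Submodule.smul_mem _ _ (Submodule.subset_span ⟨m, rfl⟩)
  have hft_inner (y : EuclideanSpace ℝ (Fin d)) : ⟪ft, k y⟫ = f y := by
    have h := hft.mapL ((innerSL ℝ).flip (k y))
    simp only [ContinuousLinearMap.flip_apply, innerSL_apply_apply, real_inner_smul_left, hk] at h
    exact h.unique (hf y)
  refine ⟨ft, ⟨hft_mem, hft_inner⟩, fun g ⟨hg_mem, hg⟩ => ?_⟩
  exact eq_of_mem_topologicalClosure_span_of_inner_eq hg_mem hft_mem fun n => by
    rw [hg, hft_inner]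

/-- If f(x) = Σ c_k K(x_k, x) pointwise with c ∈ ℓ², then there is a unique
f̃ ∈ H_{K,X} with ⟪f̃, K(·,x)⟫_K = f(x) for all x. -/
theorem stmt_10 {d : ℕ}
    (K : EuclideanSpace ℝ (Fin d) → EuclideanSpace ℝ (Fin d) → ℝ)
    (hK : IsPDKernel K)
    {H : Type*} [NormedAddCommGroup H] [InnerProductSpace ℝ H] [CompleteSpace H]
    (k : EuclideanSpace ℝ (Fin d) → H)
    (hk : ∀ x y, ⟪k x, k y⟫ = K x y)
    (hdense : (Submodule.span ℝ (Set.range k)).topologicalClosure = ⊤)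
    (x : ℕ → EuclideanSpace ℝ (Fin d)) (hx : Function.Injective x)
    -- X is determining: the infinite kernel matrix A_{K,X} acts as a bounded
    -- bijective operator T on ℓ²(ℕ)
    (T : lp (fun _ : ℕ => ℝ) 2 →L[ℝ] lp (fun _ : ℕ => ℝ) 2)
    (hTbij : Function.Bijective T)
    (hT : ∀ (c : lp (fun _ : ℕ => ℝ) 2) (j : ℕ),
      HasSum (fun m => K (x j) (x m) * c m) (T c j))
    (c : lp (fun _ : ℕ => ℝ) 2) (f : EuclideanSpace ℝ (Fin d) → ℝ)
    (hf : ∀ y, HasSum (fun m => c m * K (x m) y) (f y)) :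
    ∃! ft, ft ∈ (Submodule.span ℝ (Set.range fun n => k (x n))).topologicalClosure ∧
      ∀ y, ⟪ft, k y⟫ = f y :=
  stmt_10_general K k hk x T hT c f hf
end

section
/- Sampling theorem: If X = (x_n) is a determining sequence for K, then every f ∈ H_{K,X} can be reconstructed from its samples by f = Σ_{k∈ℕ} f(x_k) L_k, where L_k = Σ_{n∈ℕ} (A_{K,X}^{-1} e_k)_n K(·,x_n) ∈ H_{K,X} and e_k is the k-th unit vector of ℓ²(ℕ); the series converges in H_K. -/
open scoped RealInnerProductSpace

local notation "ℓ²(" ι ")" => lp (fun _ : ι => ℝ) 2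

theorem lp.hasSum_sq {ι : Type*} (c : ℓ²(ι)) : HasSum (fun i => c i ^ 2) (‖c‖ ^ 2) := by
  simpa only [real_inner_self_eq_norm_sq, Real.norm_eq_abs, sq_abs] using
    lp.hasSum_inner (𝕜 := ℝ) c c

theorem lp.hasSum_smul_apply_single {ι F : Type*} [DecidableEq ι] [NormedAddCommGroup F]
    [NormedSpace ℝ F] {p : ENNReal} [Fact (1 ≤ p)] (hp : p ≠ ⊤)
    (W : lp (fun _ : ι => ℝ) p →L[ℝ] F) (c : lp (fun _ : ι => ℝ) p) :
    HasSum (fun i => c i • W (lp.single p i 1)) (W c) := by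
  simpa only [← map_smul, ← lp.single_smul, smul_eq_mul, mul_one] using
    (lp.hasSum_single hp c).mapL W

theorem lp.adjoint_apply {ι H : Type*} [DecidableEq ι] [NormedAddCommGroup H]
    [InnerProductSpace ℝ H] [CompleteSpace H] (V : ℓ²(ι) →L[ℝ] H) (f : H) (i : ι) :
    V.adjoint f i = ⟪f, V (lp.single 2 i 1)⟫ := by
  rw [← ContinuousLinearMap.adjoint_inner_left, lp.inner_single_right, Real.inner_apply, mul_one]

theorem ContinuousLinearMap.apply_symm_adjoint_apply_of_mem_closure_range {𝕜 E F : Type*}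
    [RCLike 𝕜] [NormedAddCommGroup E] [InnerProductSpace 𝕜 E] [CompleteSpace E]
    [NormedAddCommGroup F] [InnerProductSpace 𝕜 F] [CompleteSpace F]
    (V : E →L[𝕜] F) (G : E ≃L[𝕜] E) (hG : (G : E →L[𝕜] E) = V.adjoint ∘L V) {f : F}
    (hf : f ∈ closure (Set.range V)) : V (G.symm (V.adjoint f)) = f := by
  have hrange : ∀ c, V (G.symm (V.adjoint (V c))) = V c := fun c => by
    rw [← ContinuousLinearMap.comp_apply V.adjoint V, ← hG, ContinuousLinearEquiv.coe_coe,
      G.symm_apply_apply]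
  have hclosed : IsClosed {g : F | V (G.symm (V.adjoint g)) = g} :=
    isClosed_eq (by fun_prop) continuous_id
  exact closure_minimal (by rintro _ ⟨c, rfl⟩; exact hrange c) hclosed hf

def IsGramOperator {ι H : Type*} [NormedAddCommGroup H] [InnerProductSpace ℝ H]
    (v : ι → H) (T : ℓ²(ι) →L[ℝ] ℓ²(ι)) : Prop :=
  ∀ (c : ℓ²(ι)) (j : ι), HasSum (fun m => ⟪v j, v m⟫ * c m) (T c j)

namespace IsGramOperator

variable {ι H : Type*} [NormedAddCommGroup H] [InnerProductSpace ℝ H]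
  {v : ι → H} {T : ℓ²(ι) →L[ℝ] ℓ²(ι)}

theorem apply_sum_single [DecidableEq ι] (hT : IsGramOperator v T) (c : ι → ℝ) (F : Finset ι)
    (j : ι) : T (∑ m ∈ F, lp.single 2 m (c m)) j = ∑ m ∈ F, ⟪v j, v m⟫ * c m := by
  have hcoord : ∀ m, (∑ n ∈ F, lp.single 2 n (c n) : ℓ²(ι)) m = if m ∈ F then c m else 0 := by
    simp only [lp.coeFn_single, lp.coeFn_sum, Finset.sum_apply, Finset.sum_pi_single, implies_true]
  refine ((hT _ j).unique (hasSum_sum_of_ne_finset_zero (s := F) fun m hm => ?_)).trans ?_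
  · rw [hcoord, if_neg hm, mul_zero]
  · exact Finset.sum_congr rfl fun m hm => by rw [hcoord, if_pos hm]

theorem norm_sum_smul_sq_le (hT : IsGramOperator v T) (c : ι → ℝ) (F : Finset ι) :
    ‖∑ m ∈ F, c m • v m‖ ^ 2 ≤ ‖T‖ * ∑ m ∈ F, c m ^ 2 := by
  classical
  set u : ℓ²(ι) := ∑ m ∈ F, lp.single 2 m (c m)
  have hu : ‖u‖ ^ 2 = ∑ m ∈ F, c m ^ 2 := by
    simpa [Real.norm_eq_abs, sq_abs] using lp.norm_sum_single (E := fun _ : ι => ℝ)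
      (p := 2) (by norm_num) c F
  have hquad : ‖∑ m ∈ F, c m • v m‖ ^ 2 = ⟪u, T u⟫ := by
    simp only [u, ← real_inner_self_eq_norm_sq, sum_inner, inner_sum, real_inner_smul_left,
      real_inner_smul_right, lp.inner_single_left, Real.inner_apply, hT.apply_sum_single]
    refine Finset.sum_congr rfl fun m _ => Finset.sum_congr rfl fun n _ => ?_
    rw [real_inner_comm]
    ring
  calc ‖∑ m ∈ F, c m • v m‖ ^ 2 = ⟪u, T u⟫ := hquad
    _ ≤ ‖u‖ * (‖T‖ * ‖u‖) := (real_inner_le_norm _ _).trans (by gcongr; exact T.le_opNorm u)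
    _ = ‖T‖ * ∑ m ∈ F, c m ^ 2 := by rw [← hu]; ring

variable [CompleteSpace H]

theorem summable_smul (hT : IsGramOperator v T) (c : ℓ²(ι)) : Summable fun m => c m • v m := by
  rw [summable_iff_vanishing_norm]
  intro ε hε
  obtain ⟨s, hs⟩ := summable_iff_vanishing_norm.mp (lp.hasSum_sq c).summable
    (ε ^ 2 / (‖T‖ + 1)) (by positivity)
  refine ⟨s, fun t ht => lt_of_pow_lt_pow_left₀ 2 hε.le ?_⟩
  have htail := hs t ht
  rw [Real.norm_of_nonneg (Finset.sum_nonneg fun _ _ => sq_nonneg _)] at htail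
  calc ‖∑ m ∈ t, c m • v m‖ ^ 2 ≤ ‖T‖ * ∑ m ∈ t, c m ^ 2 := hT.norm_sum_smul_sq_le c t
    _ ≤ (‖T‖ + 1) * ∑ m ∈ t, c m ^ 2 :=
      mul_le_mul_of_nonneg_right (by linarith) (Finset.sum_nonneg fun _ _ => sq_nonneg _)
    _ < (‖T‖ + 1) * (ε ^ 2 / (‖T‖ + 1)) := by gcongr
    _ = ε ^ 2 := by field_simp

theorem norm_tsum_smul_le (hT : IsGramOperator v T) (c : ℓ²(ι)) :
    ‖∑' m, c m • v m‖ ≤ √‖T‖ * ‖c‖ := by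
  have hpartial : Filter.Tendsto (fun F : Finset ι => ‖∑ m ∈ F, c m • v m‖ ^ 2) Filter.atTop
      (nhds (‖∑' m, c m • v m‖ ^ 2)) :=
    ((hT.summable_smul c).hasSum.norm).pow 2
  have hsq : ‖∑' m, c m • v m‖ ^ 2 ≤ ‖T‖ * ‖c‖ ^ 2 :=
    le_of_tendsto hpartial <| Filter.Eventually.of_forall fun F =>
      (hT.norm_sum_smul_sq_le c F).trans <| by
        gcongr
        exact sum_le_hasSum F (fun _ _ => sq_nonneg _) (lp.hasSum_sq c)
  calc ‖∑' m, c m • v m‖ = √(‖∑' m, c m • v m‖ ^ 2) := (Real.sqrt_sq (norm_nonneg _)).symm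
    _ ≤ √(‖T‖ * ‖c‖ ^ 2) := Real.sqrt_le_sqrt hsq
    _ = √‖T‖ * ‖c‖ := by rw [Real.sqrt_mul (norm_nonneg _), Real.sqrt_sq (norm_nonneg _)]

noncomputable def synthesis (hT : IsGramOperator v T) : ℓ²(ι) →L[ℝ] H :=
  LinearMap.mkContinuous
    { toFun := fun c => ∑' m, c m • v m
      map_add' := fun c d => by
        simpa only [lp.coeFn_add, Pi.add_apply, add_smul] using
          (hT.summable_smul c).tsum_add (hT.summable_smul d)
      map_smul' := fun r c => by
        simpa only [lp.coeFn_smul, Pi.smul_apply, smul_eq_mul, mul_smul, RingHom.id_apply] using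
          (hT.summable_smul c).tsum_const_smul r }
    √‖T‖ hT.norm_tsum_smul_le

theorem hasSum_synthesis (hT : IsGramOperator v T) (c : ℓ²(ι)) :
    HasSum (fun m => c m • v m) (hT.synthesis c) :=
  (hT.summable_smul c).hasSum

theorem synthesis_single [DecidableEq ι] (hT : IsGramOperator v T) (i : ι) :
    hT.synthesis (lp.single 2 i 1) = v i := by
  refine ((hT.hasSum_synthesis _).unique (hasSum_single i fun j hj => ?_)).trans ?_
  · rw [lp.single_apply_ne 2 i _ hj, zero_smul]
  · rw [lp.single_apply_self, one_smul]

theorem adjoint_synthesis_comp_synthesis (hT : IsGramOperator v T) :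
    hT.synthesis.adjoint ∘L hT.synthesis = T := by
  classical
  ext c i
  rw [ContinuousLinearMap.comp_apply, lp.adjoint_apply, synthesis_single, real_inner_comm]
  refine ((hT.hasSum_synthesis c).mapL (innerSL ℝ (v i))).unique ?_
  simpa only [innerSL_apply_apply, real_inner_smul_right, mul_comm] using hT c i

theorem closure_range_synthesis (hT : IsGramOperator v T) :
    closure (Set.range hT.synthesis) = (Submodule.span ℝ (Set.range v)).topologicalClosure := by
  classical
  refine subset_antisymm (closure_minimal ?_ (Submodule.isClosed_topologicalClosure _)) ?_
  · rintro _ ⟨c, rfl⟩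
    refine (Submodule.span ℝ (Set.range v)).isClosed_topologicalClosure.mem_of_tendsto
      (hT.hasSum_synthesis c) (Filter.Eventually.of_forall fun F => ?_)
    exact Submodule.le_topologicalClosure _ <|
      Submodule.sum_mem _ fun m _ => Submodule.smul_mem _ _ (Submodule.subset_span ⟨m, rfl⟩)
  · have hspan : Submodule.span ℝ (Set.range v) ≤ LinearMap.range (hT.synthesis : ℓ²(ι) →ₗ[ℝ] H) :=
      Submodule.span_le.mpr <| by rintro _ ⟨i, rfl⟩; exact ⟨_, hT.synthesis_single i⟩
    rw [Submodule.topologicalClosure_coe]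
    refine closure_mono fun f hf => ?_
    obtain ⟨c, rfl⟩ := hspan hf
    exact ⟨c, rfl⟩

end IsGramOperator

theorem stmt_12_general {d : ℕ}
    (K : EuclideanSpace ℝ (Fin d) → EuclideanSpace ℝ (Fin d) → ℝ)
    {H : Type*} [NormedAddCommGroup H] [InnerProductSpace ℝ H] [CompleteSpace H]
    (k : EuclideanSpace ℝ (Fin d) → H)
    (hk : ∀ x y, ⟪k x, k y⟫ = K x y)
    (x : ℕ → EuclideanSpace ℝ (Fin d))
    -- X is determining: the infinite kernel matrix A_{K,X} acts as a bounded
    -- bijective operator T on ℓ²(ℕ)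
    (T : lp (fun _ : ℕ => ℝ) 2 →L[ℝ] lp (fun _ : ℕ => ℝ) 2)
    (hTbij : Function.Bijective T)
    (hT : ∀ (c : lp (fun _ : ℕ => ℝ) 2) (j : ℕ),
      HasSum (fun m => K (x j) (x m) * c m) (T c j))
    -- a i = A_{K,X}⁻¹ e_i, and L i = Σ_n (a i)_n K(·,x_n)
    (a : ℕ → lp (fun _ : ℕ => ℝ) 2) (ha : ∀ i, T (a i) = lp.single 2 i 1)
    (L : ℕ → H) (hL : ∀ i, HasSum (fun m => a i m • k (x m)) (L i)) :
    (∀ i, L i ∈ (Submodule.span ℝ (Set.range fun n => k (x n))).topologicalClosure) ∧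
    ∀ f ∈ (Submodule.span ℝ (Set.range fun n => k (x n))).topologicalClosure,
      HasSum (fun i => ⟪f, k (x i)⟫ • L i) f := by
  have hG : IsGramOperator (fun n => k (x n)) T := fun c j => by simpa only [hk] using hT c j
  set V := hG.synthesis
  let G := ContinuousLinearEquiv.ofBijective T (LinearMap.ker_eq_bot.mpr hTbij.1)
    (LinearMap.range_eq_top.mpr hTbij.2)
  have hVa : ∀ i, V (a i) = L i := fun i => (hG.hasSum_synthesis (a i)).unique (hL i)
  have hGa : ∀ i, G.symm (lp.single 2 i 1) = a i := fun i => G.symm_apply_eq.mpr (ha i).symm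
  simp only [← SetLike.mem_coe, ← hG.closure_range_synthesis]
  refine ⟨fun i => hVa i ▸ subset_closure ⟨a i, rfl⟩, fun f hf => ?_⟩
  have hsum := lp.hasSum_smul_apply_single ENNReal.ofNat_ne_top
    (V ∘L (G.symm : lp (fun _ : ℕ => ℝ) 2 →L[ℝ] lp (fun _ : ℕ => ℝ) 2)) (V.adjoint f)
  simp only [ContinuousLinearMap.comp_apply, ContinuousLinearEquiv.coe_coe, hGa, hVa,
    lp.adjoint_apply, V, hG.synthesis_single] at hsum
  rwa [V.apply_symm_adjoint_apply_of_mem_closure_range G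
    hG.adjoint_synthesis_comp_synthesis.symm hf] at hsum

/-- Sampling theorem: every f ∈ H_{K,X} is reconstructed from its samples
f(x_k) = ⟪f, K(·,x_k)⟫_K by f = Σ f(x_k) L_k, with
L_k = Σ_n (A_{K,X}⁻¹ e_k)_n K(·,x_n) ∈ H_{K,X}, the series converging in H_K. -/
theorem stmt_12 {d : ℕ}
    (K : EuclideanSpace ℝ (Fin d) → EuclideanSpace ℝ (Fin d) → ℝ)
    (hK : IsPDKernel K)
    {H : Type*} [NormedAddCommGroup H] [InnerProductSpace ℝ H] [CompleteSpace H]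
    (k : EuclideanSpace ℝ (Fin d) → H)
    (hk : ∀ x y, ⟪k x, k y⟫ = K x y)
    (hdense : (Submodule.span ℝ (Set.range k)).topologicalClosure = ⊤)
    (x : ℕ → EuclideanSpace ℝ (Fin d)) (hx : Function.Injective x)
    -- X is determining: the infinite kernel matrix A_{K,X} acts as a bounded
    -- bijective operator T on ℓ²(ℕ)
    (T : lp (fun _ : ℕ => ℝ) 2 →L[ℝ] lp (fun _ : ℕ => ℝ) 2)
    (hTbij : Function.Bijective T)
    (hT : ∀ (c : lp (fun _ : ℕ => ℝ) 2) (j : ℕ),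
      HasSum (fun m => K (x j) (x m) * c m) (T c j))
    -- a i = A_{K,X}⁻¹ e_i, and L i = Σ_n (a i)_n K(·,x_n)
    (a : ℕ → lp (fun _ : ℕ => ℝ) 2) (ha : ∀ i, T (a i) = lp.single 2 i 1)
    (L : ℕ → H) (hL : ∀ i, HasSum (fun m => a i m • k (x m)) (L i)) :
    (∀ i, L i ∈ (Submodule.span ℝ (Set.range fun n => k (x n))).topologicalClosure) ∧
    ∀ f ∈ (Submodule.span ℝ (Set.range fun n => k (x n))).topologicalClosure,
      HasSum (fun i => ⟪f, k (x i)⟫ • L i) f :=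
  stmt_12_general K k hk x T hTbij hT a ha L hL
end
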